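/- Let T = [[1,0],[1,1]] ∈ SL₂(ℝ) (a positive unipotent element). The closure in SL₂(ℝ) of the conjugacy class {g T g⁻¹ : g ∈ SL₂(ℝ)} equals the conjugacy class together with the identity matrix: cl({g T g⁻¹ : g ∈ SL₂(ℝ)}) = {g T g⁻¹ : g ∈ SL₂(ℝ)} ∪ {I}. -/

import Mathlib

/-!
Every conjugate `g T g⁻¹` equals `I + v wᵀ` with `v = g e₂ ≠ 0` and `w = (v₁, -v₀)`, and every
nonzero `v` is the second column of some `g ∈ SL₂(ℝ)`. Hence the conjugacy class together with `I`
is the image of the continuous map `v ↦ I + v wᵀ` on all of `ℝ²`. That image is the closed set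
`{B | tr B = 2, B₁₀ ≥ 0, B₀₁ ≤ 0}`, and `I` is the limit of the conjugates at `v = (0, ε)`.
-/

open Matrix
open scoped MatrixGroups

/-- The topology on `SL₂(ℝ)` induced from the space of 2×2 real matrices. -/
noncomputable instance : TopologicalSpace (SL(2, ℝ)) :=
  TopologicalSpace.induced (fun g => (g : Matrix (Fin 2) (Fin 2) ℝ)) inferInstance

/-- The positive unipotent matrix `T = [[1,0],[1,1]]` as an element of `SL₂(ℝ)`. -/
noncomputable def posUnipotent : SL(2, ℝ) :=
  ⟨!![1, 0; 1, 1], by norm_num [Matrix.det_fin_two_of]⟩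

open Filter Set Topology

/-- `I + v wᵀ` for `v = (x, y)` and `w = (y, -x)`. -/
noncomputable def unipotentAlong (x y : ℝ) : SL(2, ℝ) :=
  ⟨!![1 + x * y, -x ^ 2; y ^ 2, 1 - x * y], by rw [det_fin_two_of]; ring⟩

@[simp]
lemma coe_unipotentAlong (x y : ℝ) :
    (unipotentAlong x y : Matrix (Fin 2) (Fin 2) ℝ) = !![1 + x * y, -x ^ 2; y ^ 2, 1 - x * y] :=
  rfl

lemma unipotentAlong_zero_zero : unipotentAlong 0 0 = 1 := by
  ext i j; fin_cases i <;> fin_cases j <;> simp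

lemma continuous_unipotentAlong : Continuous fun p : ℝ × ℝ => unipotentAlong p.1 p.2 := by
  refine continuous_induced_rng.2 (continuous_matrix fun i j => ?_)
  fin_cases i <;> fin_cases j <;> simp <;> fun_prop

/-- `g T g⁻¹ = I + (g e₂) (e₁ᵀ g⁻¹)`, and `e₁ᵀ g⁻¹ = (g₁₁, -g₀₁)` since `det g = 1`. -/
lemma conj_posUnipotent (g : SL(2, ℝ)) :
    g * posUnipotent * g⁻¹ = unipotentAlong (g 0 1) (g 1 1) := by
  have hdet : g 0 0 * g 1 1 - g 0 1 * g 1 0 = 1 := by rw [← det_fin_two]; exact g.2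
  have hT : (posUnipotent : Matrix (Fin 2) (Fin 2) ℝ) = !![1, 0; 1, 1] := rfl
  refine Subtype.ext (Matrix.ext fun i j => ?_)
  fin_cases i <;> fin_cases j <;> simp [hT, mul_apply, Fin.sum_univ_two, adjugate_fin_two]
  · linear_combination hdet
  · ring
  · ring
  · linear_combination hdet

lemma unipotentAlong_eq_iff {x y : ℝ} {B : SL(2, ℝ)} :
    unipotentAlong x y = B ↔
      1 + x * y = B 0 0 ∧ -x ^ 2 = B 0 1 ∧ y ^ 2 = B 1 0 ∧ 1 - x * y = B 1 1 := by
  refine (Matrix.SpecialLinearGroup.ext_iff _ _).trans ?_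
  simp [Fin.forall_fin_two, and_assoc]

lemma exists_conj_posUnipotent_eq {x y : ℝ} (h : x ≠ 0 ∨ y ≠ 0) :
    ∃ g : SL(2, ℝ), g * posUnipotent * g⁻¹ = unipotentAlong x y := by
  suffices ∃ g : SL(2, ℝ), g 0 1 = x ∧ g 1 1 = y by
    obtain ⟨g, rfl, rfl⟩ := this
    exact ⟨g, conj_posUnipotent g⟩
  by_cases hy : y = 0
  · have hx : x ≠ 0 := h.resolve_right (not_not.2 hy)
    exact ⟨⟨!![0, x; -x⁻¹, 0], by simp [det_fin_two_of, hx]⟩, rfl, hy.symm⟩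
  · exact ⟨⟨!![y⁻¹, x; 0, y], by simp [det_fin_two_of, hy]⟩, rfl, rfl⟩

lemma conj_posUnipotent_union_one_eq_range :
    {B : SL(2, ℝ) | ∃ g : SL(2, ℝ), g * posUnipotent * g⁻¹ = B} ∪ {1} =
      range fun p : ℝ × ℝ => unipotentAlong p.1 p.2 := by
  ext B
  constructor
  · rintro (⟨g, rfl⟩ | rfl)
    · exact ⟨(g 0 1, g 1 1), (conj_posUnipotent g).symm⟩
    · exact ⟨0, unipotentAlong_zero_zero⟩
  · rintro ⟨⟨x, y⟩, rfl⟩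
    by_cases h : x = 0 ∧ y = 0
    · obtain ⟨rfl, rfl⟩ := h
      exact Or.inr unipotentAlong_zero_zero
    · left
      exact exists_conj_posUnipotent_eq (not_and_or.1 h)

/-- Trace `2` and `det = 1` give `(B₀₀ - 1)² = -B₀₁ B₁₀`; the sign conditions then let us
take square roots. -/
lemma range_unipotentAlong :
    (range fun p : ℝ × ℝ => unipotentAlong p.1 p.2) =
      {B : SL(2, ℝ) | B 0 0 + B 1 1 = 2 ∧ 0 ≤ B 1 0 ∧ B 0 1 ≤ 0} := by
  ext B
  constructor
  · rintro ⟨⟨x, y⟩, hB⟩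
    obtain ⟨h00, h01, h10, h11⟩ := unipotentAlong_eq_iff.1 hB
    refine ⟨by linear_combination -h00 - h11, h10 ▸ sq_nonneg y, h01 ▸ ?_⟩
    exact neg_nonpos.2 (sq_nonneg x)
  · rintro ⟨htr, hc, hb⟩
    have hdet : B 0 0 * B 1 1 - B 0 1 * B 1 0 = 1 := by rw [← det_fin_two]; exact B.2
    have key : (B 0 0 - 1) ^ 2 = -(B 0 1 * B 1 0) := by
      linear_combination B 0 0 * htr - hdet
    rcases hc.lt_or_eq with hc | hc
    · have hy : √(B 1 0) ≠ 0 := (Real.sqrt_pos.2 hc).ne'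
      have hsq : √(B 1 0) ^ 2 = B 1 0 := Real.sq_sqrt hc.le
      refine ⟨((B 0 0 - 1) / √(B 1 0), √(B 1 0)), unipotentAlong_eq_iff.2 ⟨?_, ?_, hsq, ?_⟩⟩
      · field_simp; ring
      · rw [div_pow, hsq, key]; field_simp
      · field_simp; linear_combination -htr
    · have ha : B 0 0 = 1 :=
        sub_eq_zero.1 (pow_eq_zero_iff two_ne_zero |>.1 (by rw [key, ← hc, mul_zero, neg_zero]))
      refine ⟨(√(-B 0 1), 0), unipotentAlong_eq_iff.2 ⟨?_, ?_, ?_, ?_⟩⟩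
      · simp [ha]
      · rw [Real.sq_sqrt (neg_nonneg.2 hb), neg_neg]
      · simpa using hc
      · linarith

lemma isClosed_range_unipotentAlong :
    IsClosed (range fun p : ℝ × ℝ => unipotentAlong p.1 p.2) := by
  have hentry (i j : Fin 2) : Continuous fun B : SL(2, ℝ) => B i j :=
    (continuous_induced_dom
      (f := fun B : SL(2, ℝ) => (B : Matrix (Fin 2) (Fin 2) ℝ))).matrix_elem i j
  rw [range_unipotentAlong]
  exact (isClosed_eq ((hentry 0 0).add (hentry 1 1)) continuous_const).inter
    ((isClosed_le continuous_const (hentry 1 0)).inter (isClosed_le (hentry 0 1) continuous_const))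

lemma one_mem_closure_conj_posUnipotent :
    (1 : SL(2, ℝ)) ∈ closure {B : SL(2, ℝ) | ∃ g : SL(2, ℝ), g * posUnipotent * g⁻¹ = B} := by
  have hlim : Tendsto (unipotentAlong 0) (𝓝[≠] 0) (𝓝 1) := by
    rw [← unipotentAlong_zero_zero]
    exact ((continuous_unipotentAlong.comp (Continuous.prodMk_right 0)).tendsto 0).mono_left
      nhdsWithin_le_nhds
  exact mem_closure_of_tendsto hlim
    (eventually_nhdsWithin_of_forall fun y hy => exists_conj_posUnipotent_eq (Or.inr hy))

/-- The closure in `SL₂(ℝ)` of the conjugacy class of the positive unipotent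
`T = [[1,0],[1,1]]` is the conjugacy class together with the identity. -/
theorem closure_posUnipotent_conjugacy_class :
    closure {B : SL(2, ℝ) | ∃ g : SL(2, ℝ), g * posUnipotent * g⁻¹ = B}
      = {B : SL(2, ℝ) | ∃ g : SL(2, ℝ), g * posUnipotent * g⁻¹ = B} ∪ {1} := by
  have hrange := conj_posUnipotent_union_one_eq_range
  refine subset_antisymm ?_
    (union_subset subset_closure (singleton_subset_iff.2 one_mem_closure_conj_posUnipotent))
  rw [hrange]
  exact closure_minimal (subset_union_left.trans hrange.subset) isClosed_range_unipotentAlong
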